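/- arXiv:1407.2910 — 3 statements merged into one kernel-verified Lean document; each statement's English description precedes it below -/
import Mathlib

section
/- Let K be a positive trace class operator on a Hilbert space with operator norm ‖K‖ < 1 and largest eigenvalue λ₀ < 1, and trace T = tr K. Then for 0 ≤ γ ≤ 1: exp(−(T/λ₀)·(−ln(1−λ₀γ))) ≤ det(I−γK) ≤ exp(−γT). (Here the left side equals exp((T/λ₀)·ln(1−λ₀γ)).) -/
/-- For a positive trace class operator `K` with eigenvalues
`1 > lam 0 ≥ lam n ≥ 0`, trace `T = ∑' lam n` and `0 ≤ γ ≤ 1`: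
`exp((T/λ₀)·ln(1-λ₀γ)) ≤ det(I-γK) = ∏'(1-γ lam n) ≤ exp(-γT)`. -/
theorem det_one_sub_gamma_bounds (lam : ℕ → ℝ) (h0 : ∀ n, 0 ≤ lam n)
    (hmax : ∀ n, lam n ≤ lam 0) (hlt : lam 0 < 1) (hsum : Summable lam)
    (γ : ℝ) (hγ0 : 0 ≤ γ) (hγ1 : γ ≤ 1) :
    Real.exp ((∑' n, lam n) / lam 0 * Real.log (1 - lam 0 * γ)) ≤
      ∏' n, (1 - γ * lam n) ∧
    (∏' n, (1 - γ * lam n)) ≤ Real.exp (-(γ * ∑' n, lam n)) := by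
  rcases eq_or_lt_of_le (h0 0) with h00 | h00
  · -- lam 0 = 0, hence all lam n = 0
    have hz : ∀ n, lam n = 0 := fun n => le_antisymm (by simpa [← h00] using hmax n) (h0 n)
    have hts : (∑' n, lam n) = 0 := by simp [hz]
    have htp : (∏' n, (1 - γ * lam n)) = 1 := by
      have : (fun n => 1 - γ * lam n) = fun _ => (1 : ℝ) := by funext n; simp [hz n]
      rw [this]; exact tprod_one
    simp [hts, htp, ← h00]
  · -- lam 0 > 0
    set c := Real.log (1 - lam 0 * γ) with hc
    have hpos : ∀ n, 0 < 1 - γ * lam n := by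
      intro n
      have h1 : γ * lam n ≤ lam n := by nlinarith [h0 n]
      have h2 : lam n < 1 := lt_of_le_of_lt (hmax n) hlt
      linarith
    have hbase : 0 < 1 - lam 0 * γ := by nlinarith
    have hclam : c ≤ 0 := Real.log_nonpos (by positivity) (by nlinarith)
    -- lower pointwise bound
    have hlow : ∀ n, lam n / lam 0 * c ≤ Real.log (1 - γ * lam n) := by
      intro n
      set t := lam n / lam 0 with ht
      have ht0 : 0 ≤ t := div_nonneg (h0 n) h00.le
      have ht1 : t ≤ 1 := (div_le_one h00).2 (hmax n)
      have hgm := Real.geom_mean_le_arith_mean2_weighted ht0 (by linarith : (0:ℝ) ≤ 1 - t)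
        hbase.le zero_le_one (by ring)
      have htlam : t * lam 0 = lam n := div_mul_cancel₀ _ (ne_of_gt h00)
      have hineq : (1 - lam 0 * γ) ^ t ≤ 1 - γ * lam n := by
        calc (1 - lam 0 * γ) ^ t = (1 - lam 0 * γ) ^ t * (1:ℝ) ^ (1 - t) := by simp
        _ ≤ t * (1 - lam 0 * γ) + (1 - t) * 1 := hgm
        _ = 1 - γ * lam n := by rw [← htlam]; ring
      have := Real.log_le_log (by positivity) hineq
      rwa [Real.log_rpow hbase] at this
    -- upper pointwise bound
    have hup : ∀ n, Real.log (1 - γ * lam n) ≤ -(γ * lam n) := by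
      intro n
      have := Real.log_le_sub_one_of_pos (hpos n)
      linarith
    -- summability of the logs
    have hgsum : Summable (fun n => lam n / lam 0 * c) := by
      have : (fun n => lam n / lam 0 * c) = fun n => lam n * (c / lam 0) := by
        funext n; ring
      rw [this]; exact hsum.mul_right _
    have hlogsum : Summable (fun n => Real.log (1 - γ * lam n)) := by
      have hneg : Summable (fun n => -Real.log (1 - γ * lam n)) := by
        apply Summable.of_nonneg_of_le (fun n => ?_) (fun n => ?_) hgsum.neg
        · have := hup n; nlinarith [h0 n]
        · linarith [hlow n]
      simpa using hneg.neg
    -- the product equals exp of the sum of logs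
    have hprod : (∏' n, (1 - γ * lam n)) =
        Real.exp (∑' n, Real.log (1 - γ * lam n)) := by
      have h1 : HasProd (fun n => Real.exp (Real.log (1 - γ * lam n)))
          (Real.exp (∑' n, Real.log (1 - γ * lam n))) := hlogsum.hasSum.rexp
      have heq : (fun n => Real.exp (Real.log (1 - γ * lam n))) =
          fun n => 1 - γ * lam n := funext fun n => Real.exp_log (hpos n)
      rw [heq] at h1
      exact h1.tprod_eq
    rw [hprod]
    constructor
    · rw [Real.exp_le_exp]
      calc (∑' n, lam n) / lam 0 * c = ∑' n, lam n * (c / lam 0) := by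
            rw [tsum_mul_right]; ring
        _ = ∑' n, lam n / lam 0 * c := by congr 1; funext n; ring
        _ ≤ ∑' n, Real.log (1 - γ * lam n) := Summable.tsum_le_tsum hlow hgsum hlogsum
    · rw [Real.exp_le_exp]
      calc (∑' n, Real.log (1 - γ * lam n)) ≤ ∑' n, -(γ * lam n) :=
            Summable.tsum_le_tsum hup hlogsum (by simpa using (hsum.mul_left γ).neg)
        _ = -(γ * ∑' n, lam n) := by rw [tsum_neg, tsum_mul_left]
end

section
/- Define g(z) = ∫_1^z sqrt((μ²−a²)/(μ²−1)) dμ for z ∈ ℂ∖[−1,1] with 0 < a < 1, integrating along paths avoiding [−1,1] and with the principal branch of the square root (positive for μ > 1). Then as z → ∞, g(z) = z + ℓ − (1−a²)/(2z) + O(z^{−2}), where ℓ = ∫_1^∞ (sqrt((μ²−a²)/(μ²−1)) − 1) dμ − 1. -/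
/-!
With `t = (1 - a²)/(μ² - 1)` the integrand is `√(1 + t)`, so for large `μ` it equals
`1 + (1 - a²)/(2μ²) + O(μ⁻⁴)`, while at `μ = 1` it has an integrable `(μ - 1)^(-1/2)` singularity.
So `g' - 1` is integrable on `(1, ∞)`, `g(z) = z - 1 + ∫₁^∞ (g' - 1) - ∫_z^∞ (g' - 1)`, and
integrating the expansion over the tail `(z, ∞)` gives `(1 - a²)/(2z) + O(z⁻³)`.
-/

open Filter intervalIntegral MeasureTheory Set Asymptotics

theorem abs_sqrt_one_add_sub_le {t : ℝ} (h0 : 0 ≤ t) (h8 : t ≤ 8) :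
    |√(1 + t) - (1 + t / 2)| ≤ t ^ 2 / 8 := by
  have hub : √(1 + t) ≤ 1 + t / 2 :=
    Real.sqrt_le_iff.2 ⟨by linarith, by nlinarith⟩
  have hlb : 1 + t / 2 - t ^ 2 / 8 ≤ √(1 + t) :=
    Real.le_sqrt_of_sq_le (by nlinarith [mul_nonneg (pow_nonneg h0 3) (sub_nonneg.2 h8)])
  rw [abs_le]
  constructor <;> linarith

theorem one_div_pow_eq_rpow_neg (x : ℝ) (n : ℕ) : 1 / x ^ n = x ^ (-(n : ℝ)) := by
  rw [Real.rpow_neg_natCast, zpow_neg, zpow_natCast, one_div]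

theorem integrableOn_Ioi_one_div_pow {n : ℕ} (hn : 2 ≤ n) {z : ℝ} (hz : 0 < z) :
    IntegrableOn (fun x : ℝ => 1 / x ^ n) (Ioi z) :=
  (integrableOn_Ioi_rpow_of_lt (by norm_cast; omega) hz).congr_fun
    (fun x _ => (one_div_pow_eq_rpow_neg x n).symm) measurableSet_Ioi

theorem integral_Ioi_one_div_pow {n : ℕ} (hn : 2 ≤ n) {z : ℝ} (hz : 0 < z) :
    ∫ x in Ioi z, 1 / x ^ n = 1 / ((n - 1) * z ^ (n - 1)) := by
  have hn' : (1 : ℝ) < n := Nat.one_lt_cast.2 (by omega)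
  rw [setIntegral_congr_fun measurableSet_Ioi (fun x _ => one_div_pow_eq_rpow_neg x n),
    integral_Ioi_rpow_of_lt (by linarith) hz,
    show -(n : ℝ) + 1 = -((n - 1 : ℕ) : ℝ) by push_cast [Nat.cast_sub (by omega : 1 ≤ n)]; ring,
    ← one_div_pow_eq_rpow_neg]
  push_cast [Nat.cast_sub (by omega : 1 ≤ n)]
  field_simp

theorem abs_setIntegral_Ioi_le_of_abs_le_one_div_pow {f : ℝ → ℝ} {n : ℕ} (hn : 2 ≤ n)
    {z : ℝ} (hz : 0 < z) (hf : ∀ x, z < x → |f x| ≤ 1 / x ^ n) :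
    |∫ x in Ioi z, f x| ≤ 1 / ((n - 1) * z ^ (n - 1)) := by
  rw [← integral_Ioi_one_div_pow hn hz, ← Real.norm_eq_abs]
  refine norm_integral_le_of_norm_le (integrableOn_Ioi_one_div_pow hn hz) ?_
  filter_upwards [ae_restrict_mem measurableSet_Ioi] with x hx using hf x hx

theorem integrableOn_Ioi_of_abs_le_one_div_pow {f : ℝ → ℝ} {n : ℕ} (hn : 2 ≤ n)
    {z : ℝ} (hz : 0 < z) (hmeas : AEStronglyMeasurable f (volume.restrict (Ioi z)))
    (hf : ∀ x, z < x → |f x| ≤ 1 / x ^ n) : IntegrableOn f (Ioi z) :=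
  (integrableOn_Ioi_one_div_pow hn hz).mono' hmeas <|
    (ae_restrict_mem measurableSet_Ioi).mono fun x hx => hf x hx

theorem integrableOn_Ioi_const_div_two_mul_sq (c : ℝ) {z : ℝ} (hz : 0 < z) :
    IntegrableOn (fun x : ℝ => c / (2 * x ^ 2)) (Ioi z) :=
  IntegrableOn.congr_fun ((integrableOn_Ioi_one_div_pow le_rfl hz).const_mul (c / 2))
    (fun x _ => by ring) measurableSet_Ioi

/-- `g'` on `(1, ∞)`, where the principal branch of the square root is the positive real root. -/
noncomputable def gIntegrand (a μ : ℝ) : ℝ := √((μ ^ 2 - a ^ 2) / (μ ^ 2 - 1))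

@[fun_prop]
theorem measurable_gIntegrand (a : ℝ) : Measurable (gIntegrand a) := by
  unfold gIntegrand; fun_prop

theorem gIntegrand_le (a : ℝ) {μ : ℝ} (h1 : 1 < μ) (h2 : μ ≤ 2) :
    gIntegrand a μ ≤ 2 * (μ - 1) ^ (-(1 / 2 : ℝ)) := by
  have hd : 0 < μ ^ 2 - 1 := by nlinarith
  have hm : 0 < μ - 1 := by linarith
  calc gIntegrand a μ ≤ √(4 / (μ - 1)) :=
        Real.sqrt_le_sqrt ((div_le_div_iff₀ hd hm).2 (by nlinarith))
    _ = 2 * (μ - 1) ^ (-(1 / 2 : ℝ)) := by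
        rw [Real.sqrt_div' _ hm.le, show (4 : ℝ) = 2 ^ 2 by norm_num, Real.sqrt_sq zero_le_two,
          Real.sqrt_eq_rpow, Real.rpow_neg hm.le, div_eq_mul_inv]

theorem integrableOn_gIntegrand_Ioc (a : ℝ) : IntegrableOn (gIntegrand a) (Ioc 1 2) := by
  have hsing : IntegrableOn (fun x : ℝ => (x - 1) ^ (-(1 / 2 : ℝ))) (Ioc 1 2) := by
    have h := (intervalIntegrable_rpow' (a := 0) (b := 1) (r := -(1 / 2))
      (by norm_num)).comp_sub_right 1
    norm_num at h
    exact (intervalIntegrable_iff_integrableOn_Ioc_of_le one_le_two).1 h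
  refine (hsing.const_mul 2).mono' (measurable_gIntegrand a).aestronglyMeasurable ?_
  filter_upwards [ae_restrict_mem measurableSet_Ioc] with μ ⟨h1, h2⟩
  exact (Real.norm_of_nonneg (Real.sqrt_nonneg _)).trans_le (gIntegrand_le a h1 h2)

theorem abs_gIntegrand_sub_le {a μ : ℝ} (ha : a ^ 2 ≤ 1) (hμ : 2 ≤ μ) :
    |gIntegrand a μ - 1 - (1 - a ^ 2) / (2 * μ ^ 2)| ≤ 1 / μ ^ 4 := by
  have hd : 0 < μ ^ 2 - 1 := by nlinarith
  obtain ⟨t, ht_def⟩ : ∃ t, t = (1 - a ^ 2) / (μ ^ 2 - 1) := ⟨_, rfl⟩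
  have ht0 : 0 ≤ t := ht_def ▸ div_nonneg (by linarith) hd.le
  have ht : t ≤ 4 / (3 * μ ^ 2) := by
    rw [ht_def, div_le_div_iff₀ hd (by positivity)]; nlinarith
  have hsplit : gIntegrand a μ - 1 - (1 - a ^ 2) / (2 * μ ^ 2)
      = (√(1 + t) - (1 + t / 2)) + t / (2 * μ ^ 2) := by
    rw [gIntegrand, show (μ ^ 2 - a ^ 2) / (μ ^ 2 - 1) = 1 + t by rw [ht_def]; field_simp; ring]
    rw [ht_def]
    field_simp
    ring
  have ht8 : t ≤ 8 := ht.trans (by rw [div_le_iff₀ (by positivity)]; nlinarith)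
  rw [hsplit]
  calc _ ≤ |√(1 + t) - (1 + t / 2)| + |t / (2 * μ ^ 2)| := abs_add_le _ _
    _ ≤ t ^ 2 / 8 + t / (2 * μ ^ 2) := by
        rw [abs_of_nonneg (div_nonneg ht0 (by positivity))]
        gcongr
        exact abs_sqrt_one_add_sub_le ht0 ht8
    _ ≤ (4 / (3 * μ ^ 2)) ^ 2 / 8 + 4 / (3 * μ ^ 2) / (2 * μ ^ 2) := by gcongr
    _ ≤ 1 / μ ^ 4 := by
        rw [← sub_nonneg]
        field_simp
        ring_nf
        positivity

theorem integrableOn_gIntegrand_sub_expansion {a : ℝ} (ha : a ^ 2 ≤ 1) :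
    IntegrableOn (fun μ => gIntegrand a μ - 1 - (1 - a ^ 2) / (2 * μ ^ 2)) (Ioi 2) :=
  integrableOn_Ioi_of_abs_le_one_div_pow (n := 4) (by norm_num) two_pos
    (by fun_prop) fun _ hμ => abs_gIntegrand_sub_le ha hμ.le

theorem integrableOn_gIntegrand_sub_one {a : ℝ} (ha : a ^ 2 ≤ 1) :
    IntegrableOn (fun μ => gIntegrand a μ - 1) (Ioi 1) := by
  rw [← Ioc_union_Ioi_eq_Ioi one_le_two]
  refine ((integrableOn_gIntegrand_Ioc a).sub (integrableOn_const (by simp))).union ?_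
  exact ((integrableOn_gIntegrand_sub_expansion ha).add
    (integrableOn_Ioi_const_div_two_mul_sq (1 - a ^ 2) two_pos)).congr_fun
    (fun μ _ => by simp only [Pi.add_apply, Pi.sub_apply]; ring) measurableSet_Ioi

theorem intervalIntegral_gIntegrand_eq {a : ℝ} (ha : a ^ 2 ≤ 1) {z : ℝ} (hz : 1 ≤ z) :
    ∫ μ in (1 : ℝ)..z, gIntegrand a μ =
      z - 1 + (∫ μ in Ioi 1, (gIntegrand a μ - 1)) - ∫ μ in Ioi z, (gIntegrand a μ - 1) := by
  have hint := integrableOn_gIntegrand_sub_one ha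
  have hIoc : IntegrableOn (fun μ => gIntegrand a μ - 1) (Ioc 1 z) :=
    hint.mono_set Ioc_subset_Ioi_self
  have hsplit := setIntegral_union Ioc_disjoint_Ioi_same measurableSet_Ioi hIoc
    (hint.mono_set (Ioi_subset_Ioi hz))
  rw [Ioc_union_Ioi_eq_Ioi hz] at hsplit
  have hIoc_eq :
      ∫ μ in Ioc 1 z, gIntegrand a μ = (∫ μ in Ioc 1 z, (gIntegrand a μ - 1)) + (z - 1) := by
    rw [← Real.volume_real_Ioc_of_le hz, ← mul_one (volume.real _), ← smul_eq_mul,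
      ← setIntegral_const, ← integral_add hIoc (integrableOn_const (by simp))]
    simp
  rw [integral_of_le hz, hIoc_eq, hsplit]
  ring

theorem setIntegral_Ioi_gIntegrand_sub_one_eq {a : ℝ} (ha : a ^ 2 ≤ 1) {z : ℝ} (hz : 2 ≤ z) :
    ∫ μ in Ioi z, (gIntegrand a μ - 1) =
      (1 - a ^ 2) / (2 * z) + ∫ μ in Ioi z, (gIntegrand a μ - 1 - (1 - a ^ 2) / (2 * μ ^ 2)) := by
  have hz0 : 0 < z := by linarith
  have hmain : ∫ μ in Ioi z, (1 - a ^ 2) / (2 * μ ^ 2) = (1 - a ^ 2) / (2 * z) := by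
    calc ∫ μ in Ioi z, (1 - a ^ 2) / (2 * μ ^ 2)
        = ∫ μ in Ioi z, (1 - a ^ 2) / 2 * (1 / μ ^ 2) := by congr 1; ext μ; ring
      _ = (1 - a ^ 2) / (2 * z) := by
          rw [MeasureTheory.integral_const_mul, integral_Ioi_one_div_pow le_rfl hz0]
          norm_num
          ring
  rw [← hmain, ← MeasureTheory.integral_add (integrableOn_Ioi_const_div_two_mul_sq _ hz0)
    ((integrableOn_gIntegrand_sub_expansion ha).mono_set (Ioi_subset_Ioi hz))]
  simp

theorem abs_g_sub_expansion_le {a : ℝ} (ha : a ^ 2 ≤ 1) {z : ℝ} (hz : 2 ≤ z) :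
    |(∫ μ in (1 : ℝ)..z, gIntegrand a μ) -
        (z + ((∫ μ in Ioi 1, (gIntegrand a μ - 1)) - 1) - (1 - a ^ 2) / (2 * z))| ≤
      1 / (3 * z ^ 3) := by
  have hrem := abs_setIntegral_Ioi_le_of_abs_le_one_div_pow (n := 4) (by norm_num)
    (by linarith : 0 < z) fun μ hμ => abs_gIntegrand_sub_le ha (hz.trans hμ.le)
  norm_num at hrem
  rw [intervalIntegral_gIntegrand_eq ha (by linarith),
    setIntegral_Ioi_gIntegrand_sub_one_eq ha hz]
  convert (abs_neg _).trans_le hrem using 2 <;> ring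

/-- With `g(z) = ∫_1^z sqrt((μ²-a²)/(μ²-1)) dμ` (positive branch
for `μ > 1`), one has `g(z) = z + ℓ - (1-a²)/(2z) + O(z⁻²)` as `z → ∞`, where
`ℓ = ∫_1^∞ (sqrt((μ²-a²)/(μ²-1)) - 1) dμ - 1`. -/
theorem g_asymptotics_at_infinity (a : ℝ) (ha0 : 0 < a) (ha1 : a < 1) :
    (fun z : ℝ =>
        (∫ μ in (1 : ℝ)..z, Real.sqrt ((μ ^ 2 - a ^ 2) / (μ ^ 2 - 1))) -
          (z + ((∫ μ in Set.Ioi (1 : ℝ),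
              (Real.sqrt ((μ ^ 2 - a ^ 2) / (μ ^ 2 - 1)) - 1)) - 1) -
            (1 - a ^ 2) / (2 * z)))
      =O[atTop] fun z : ℝ => 1 / z ^ 2 := by
  have ha : a ^ 2 ≤ 1 := by nlinarith
  refine IsBigO.of_bound 1 ?_
  filter_upwards [eventually_ge_atTop 2] with z hz
  have hz0 : 0 < z := by linarith
  calc _ ≤ 1 / (3 * z ^ 3) := abs_g_sub_expansion_le ha hz
    _ ≤ 1 * ‖1 / z ^ 2‖ := by
      rw [one_mul, Real.norm_of_nonneg (by positivity),
        div_le_div_iff₀ (by positivity) (by positivity)]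
      nlinarith
end

section
/- As a ↑ 1, the elliptic-type integral satisfies ∫_a^1 sqrt((μ²−a²)/(1−μ²)) dμ = (π/2)(1−a)(1 − (1−a)/4 + O((1−a)²)). -/
open Filter Topology MeasureTheory intervalIntegral Set Real

/-!
Factor the integrand as `√((μ - a) / (1 - μ)) * √((μ + a) / (1 + μ))`. The first factor has an
arcsine antiderivative and integrates to `(1 - a) π / 2` exactly. On `[a, 1]` the second factor
differs from its endpoint value `√((1 + a) / 2)` by at most `(1 - a)(1 - μ)`, and this loss is
absorbed by `√((μ - a) / (1 - μ)) (1 - μ) = √((μ - a)(1 - μ)) ≤ (1 - a) / 2`, so freezing the second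
factor costs `O((1 - a)³)`. It remains to expand `√((1 + a) / 2) = 1 - (1 - a) / 4 + O((1 - a)²)`.
-/

lemma Real.sqrt_sub_sqrt_le_div {x y : ℝ} (hy : 0 ≤ y) (hyx : y ≤ x) :
    √x - √y ≤ (x - y) / √x := by
  rcases (Real.sqrt_nonneg x).eq_or_lt with hx | hx
  · rw [← hx, div_zero, zero_sub, neg_nonpos]
    exact Real.sqrt_nonneg y
  · rw [le_div_iff₀ hx]
    nlinarith [Real.mul_self_sqrt hy, Real.mul_self_sqrt (hy.trans hyx), Real.sqrt_nonneg y]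

lemma Real.abs_sqrt_one_sub_half_sub_le {ε : ℝ} (hε0 : 0 ≤ ε) (hε1 : ε ≤ 1) :
    |√(1 - ε / 2) - (1 - ε / 4)| ≤ ε ^ 2 / 12 := by
  have hpos : 0 < 1 - ε / 4 := by linarith
  have hsq : √((1 - ε / 4) ^ 2) = 1 - ε / 4 := Real.sqrt_sq hpos.le
  have hle : 1 - ε / 2 ≤ (1 - ε / 4) ^ 2 := by nlinarith
  have hlower := Real.sqrt_sub_sqrt_le_div (by linarith) hle
  have hupper := Real.sqrt_le_sqrt hle
  rw [hsq, le_div_iff₀ hpos] at hlower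
  rw [hsq] at hupper
  rw [abs_sub_comm, abs_of_nonneg (sub_nonneg.2 hupper)]
  nlinarith

lemma integral_sqrt_div_one_sub : ∫ t in (0 : ℝ)..1, √(t / (1 - t)) = π / 2 := by
  set F : ℝ → ℝ := fun t => arcsin (2 * t - 1) / 2 - √(t - t ^ 2)
  have hcont : ContinuousOn F (Icc 0 1) := by fun_prop
  have hderiv : ∀ t ∈ Ioo (0 : ℝ) 1, HasDerivAt F (√(t / (1 - t))) t := by
    rintro t ⟨ht0, ht1⟩
    have hq : 0 < t - t ^ 2 := by nlinarith
    have hlin : HasDerivAt (fun t => 2 * t - 1) 2 t := by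
      simpa using ((hasDerivAt_id t).const_mul 2).sub_const 1
    have hpoly : HasDerivAt (fun t => t - t ^ 2) (1 - 2 * t) t :=
      ((hasDerivAt_id' t).sub (hasDerivAt_pow 2 t)).congr_deriv (by norm_num)
    have harcsin : HasDerivAt (fun t => arcsin (2 * t - 1)) (1 / √(1 - (2 * t - 1) ^ 2) * 2) t :=
      (hasDerivAt_arcsin (by linarith) (by linarith)).comp t hlin
    refine ((harcsin.div_const 2).sub (hpoly.sqrt hq.ne')).congr_deriv ?_
    have h4 : √(1 - (2 * t - 1) ^ 2) = 2 * √(t - t ^ 2) := by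
      rw [show 1 - (2 * t - 1) ^ 2 = 2 ^ 2 * (t - t ^ 2) by ring,
        Real.sqrt_mul (by norm_num), Real.sqrt_sq (by norm_num)]
    have hquot : √(t / (1 - t)) = t / √(t - t ^ 2) := by
      rw [show t / (1 - t) = t ^ 2 / (t - t ^ 2) by field_simp, Real.sqrt_div' _ hq.le,
        Real.sqrt_sq ht0.le]
    rw [h4, hquot]
    field_simp
    ring
  have hint : IntervalIntegrable (fun t => √(t / (1 - t))) volume 0 1 :=
    (intervalIntegrable_iff_integrableOn_Ioc_of_le zero_le_one).2
      (integrableOn_deriv_of_nonneg hcont hderiv fun _ _ => Real.sqrt_nonneg _)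
  rw [integral_eq_sub_of_hasDerivAt_of_le zero_le_one hcont hderiv hint]
  norm_num [F]
  ring

lemma integral_sqrt_sub_div_sub {a b : ℝ} (hab : a < b) :
    ∫ μ in a..b, √((μ - a) / (b - μ)) = (b - a) * (π / 2) := by
  have hc : b - a ≠ 0 := (sub_pos.2 hab).ne'
  have key := integral_comp_mul_add (a := 0) (b := 1)
    (fun μ => √((μ - a) / (b - μ))) hc a
  have hscale : ∀ t, ((b - a) * t + a - a) / (b - ((b - a) * t + a)) = t / (1 - t) := fun t => by
    rw [show b - ((b - a) * t + a) = (b - a) * (1 - t) by ring, add_sub_cancel_right,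
      mul_div_mul_left _ _ hc]
  simp only [hscale, integral_sqrt_div_one_sub, mul_zero, zero_add, mul_one,
    sub_add_cancel] at key
  rw [key, smul_eq_mul, mul_inv_cancel_left₀ hc]

lemma sqrt_sq_sub_sq_div_one_sub_sq {a μ : ℝ} (haμ : a ≤ μ) (hμ : μ ≤ 1) :
    √((μ ^ 2 - a ^ 2) / (1 - μ ^ 2)) = √((μ - a) / (1 - μ)) * √((μ + a) / (1 + μ)) := by
  rw [← Real.sqrt_mul (div_nonneg (by linarith) (by linarith)), div_mul_div_comm]
  ring_nf

lemma sqrt_sub_div_one_sub_mul_le {a μ : ℝ} (haμ : a ≤ μ) (hμ : μ ≤ 1) :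
    √((μ - a) / (1 - μ)) * (1 - μ) ≤ (1 - a) / 2 := by
  rcases hμ.eq_or_lt with rfl | hμ
  · simp only [sub_self, div_zero, sqrt_zero, mul_zero]
    linarith
  have h1 : 0 < 1 - μ := by linarith
  have hsq : (√((μ - a) / (1 - μ)) * (1 - μ)) ^ 2 = (μ - a) * (1 - μ) := by
    rw [mul_pow, Real.sq_sqrt (div_nonneg (by linarith) h1.le)]
    field_simp
  apply le_of_sq_le_sq _ (by linarith)
  rw [hsq]
  nlinarith [sq_nonneg (μ - a - (1 - μ))]

lemma abs_sqrt_add_div_one_add_sub_le {a μ : ℝ} (ha : 0 ≤ a) (haμ : a ≤ μ) (hμ : μ ≤ 1) :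
    |√((μ + a) / (1 + μ)) - √((1 + a) / 2)| ≤ (1 - a) * (1 - μ) := by
  have h1μ : 0 < 1 + μ := by linarith
  have hgap : 0 ≤ (1 - a) * (1 - μ) := mul_nonneg (by linarith) (by linarith)
  have hdiff : (1 + a) / 2 - (μ + a) / (1 + μ) = (1 - a) * (1 - μ) / (2 * (1 + μ)) := by
    field_simp; ring
  have hyx : (μ + a) / (1 + μ) ≤ (1 + a) / 2 := by
    rw [← sub_nonneg, hdiff]; positivity
  have hhalf : 1 / 2 ≤ √((1 + a) / 2) := by
    rw [show (1 : ℝ) / 2 = √((1 / 2) ^ 2) by rw [Real.sqrt_sq]; norm_num]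
    exact Real.sqrt_le_sqrt (by linarith)
  have key := Real.sqrt_sub_sqrt_le_div (div_nonneg (by linarith) h1μ.le) hyx
  rw [hdiff, le_div_iff₀ (by linarith)] at key
  have hshrink : (1 - a) * (1 - μ) / (2 * (1 + μ)) ≤ (1 - a) * (1 - μ) / 2 :=
    div_le_div_of_nonneg_left hgap (by norm_num) (by linarith)
  rw [abs_sub_comm, abs_of_nonneg (sub_nonneg.2 (Real.sqrt_le_sqrt hyx))]
  nlinarith [Real.sqrt_le_sqrt hyx]

lemma abs_integral_sqrt_sq_sub_sq_div_one_sub_sq_sub_le {a : ℝ} (ha0 : 0 ≤ a) (ha1 : a < 1) :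
    |(∫ μ in a..1, √((μ ^ 2 - a ^ 2) / (1 - μ ^ 2))) - √((1 + a) / 2) * ((1 - a) * (π / 2))|
      ≤ (1 - a) ^ 3 / 2 := by
  set h : ℝ → ℝ := fun μ => √((μ - a) / (1 - μ))
  set g : ℝ → ℝ := fun μ => √((μ + a) / (1 + μ))
  set g₁ := √((1 + a) / 2)
  have hε : 0 < 1 - a := sub_pos.2 ha1
  -- a non-integrable function would have integral `0`
  have hh : IntervalIntegrable h volume a 1 := by
    apply intervalIntegrable_of_integral_ne_zero
    rw [integral_sqrt_sub_div_sub ha1]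
    exact (mul_pos hε (by positivity)).ne'
  have hg : ContinuousOn g (uIcc a 1) := by
    rw [uIcc_of_le ha1.le]
    refine (ContinuousOn.div (by fun_prop) (by fun_prop) fun μ hμ => ?_).sqrt
    exact (show 0 < 1 + μ by linarith [hμ.1]).ne'
  have hfactor : EqOn (fun μ => √((μ ^ 2 - a ^ 2) / (1 - μ ^ 2))) (fun μ => h μ * g μ)
      (uIcc a 1) := by
    intro μ hμ
    rw [uIcc_of_le ha1.le] at hμ
    exact sqrt_sq_sub_sq_div_one_sub_sq hμ.1 hμ.2
  have hsplit : (∫ μ in a..1, √((μ ^ 2 - a ^ 2) / (1 - μ ^ 2))) - g₁ * ((1 - a) * (π / 2))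
      = ∫ μ in a..1, h μ * (g μ - g₁) := by
    rw [integral_congr hfactor, ← integral_sqrt_sub_div_sub ha1,
      ← intervalIntegral.integral_const_mul,
      ← integral_sub (hh.mul_continuousOn hg) (hh.const_mul g₁)]
    congr 1 with μ
    ring
  have hbound : ∀ μ ∈ uIoc a 1, ‖h μ * (g μ - g₁)‖ ≤ (1 - a) ^ 2 / 2 := by
    intro μ hμ
    rw [uIoc_of_le ha1.le] at hμ
    have haμ := hμ.1.le
    calc ‖h μ * (g μ - g₁)‖ = h μ * |g μ - g₁| := by
          rw [Real.norm_eq_abs, abs_mul, abs_of_nonneg (Real.sqrt_nonneg _)]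
      _ ≤ h μ * ((1 - a) * (1 - μ)) :=
          mul_le_mul_of_nonneg_left (abs_sqrt_add_div_one_add_sub_le ha0 haμ hμ.2)
            (Real.sqrt_nonneg _)
      _ = h μ * (1 - μ) * (1 - a) := by ring
      _ ≤ (1 - a) / 2 * (1 - a) :=
          mul_le_mul_of_nonneg_right (sqrt_sub_div_one_sub_mul_le haμ hμ.2) hε.le
      _ = (1 - a) ^ 2 / 2 := by ring
  rw [← Real.norm_eq_abs, hsplit]
  calc ‖∫ μ in a..1, h μ * (g μ - g₁)‖ ≤ (1 - a) ^ 2 / 2 * |1 - a| :=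
        norm_integral_le_of_norm_le_const hbound
    _ = (1 - a) ^ 3 / 2 := by rw [abs_of_pos hε]; ring

/-- As `a ↑ 1`,
`∫_a^1 sqrt((μ²-a²)/(1-μ²)) dμ = (π/2)(1-a)(1 - (1-a)/4 + O((1-a)²))`. -/
theorem ellInt_asymptotics_a_to_one :
    (fun a : ℝ =>
        (∫ μ in a..1, Real.sqrt ((μ ^ 2 - a ^ 2) / (1 - μ ^ 2))) -
          Real.pi / 2 * (1 - a) * (1 - (1 - a) / 4))
      =O[𝓝[<] (1 : ℝ)] fun a : ℝ => (1 - a) ^ 3 := by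
  refine Asymptotics.IsBigO.of_bound 1 ?_
  filter_upwards [Ioo_mem_nhdsLT (show (0 : ℝ) < 1 by norm_num)] with a ⟨ha0, ha1⟩
  have hε : 0 < 1 - a := sub_pos.2 ha1
  have hintegral := abs_integral_sqrt_sq_sub_sq_div_one_sub_sq_sub_le ha0.le ha1
  have hcoeff := Real.abs_sqrt_one_sub_half_sub_le hε.le (by linarith)
  rw [show 1 - (1 - a) / 2 = (1 + a) / 2 by ring] at hcoeff
  set I := ∫ μ in a..1, √((μ ^ 2 - a ^ 2) / (1 - μ ^ 2))
  have hsplit : I - π / 2 * (1 - a) * (1 - (1 - a) / 4)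
      = (I - √((1 + a) / 2) * ((1 - a) * (π / 2)))
        + (1 - a) * (π / 2) * (√((1 + a) / 2) - (1 - (1 - a) / 4)) := by ring
  rw [Real.norm_eq_abs, Real.norm_eq_abs, one_mul, abs_of_pos (pow_pos hε 3), hsplit]
  calc _ ≤ (1 - a) ^ 3 / 2 + (1 - a) * (π / 2) * ((1 - a) ^ 2 / 12) := by
        refine (abs_add_le _ _).trans (add_le_add hintegral ?_)
        rw [abs_mul, abs_of_pos (by positivity)]
        exact mul_le_mul_of_nonneg_left hcoeff (by positivity)
    _ ≤ (1 - a) ^ 3 := by nlinarith [pi_lt_four, pow_pos hε 3]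
end
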